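/- Under the constraint φ₂ = φ₁u₁, the quadratic form Φᵀ Ã₁ Φ simplifies to u₁(α²φ₁² + ((γ−1)/2)(φ₂² + φ₃²) + γφ₄²); i.e. the inviscid boundary flux in the x₁ direction equals u₁ times a positive definite quadratic form in Φ (for α² > 0, γ > 1). -/
import Mathlib


open Matrix

theorem inviscid_flux_is_un_times_posdef_form
    (α γ u₁ φ₁ φ₂ φ₃ φ₄ : ℝ)
    (hα : 0 < α ^ 2) (hγ : 1 < γ) (hφ₁ : 0 < φ₁) (hφ₂ : φ₂ = φ₁ * u₁)
    (A₁ : Matrix (Fin 4) (Fin 4) ℝ)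
    (hA : A₁ = !![α ^ 2 * u₁, 0, 0, 0;
                  0, (γ - 1) / 2 * u₁, 0, 0;
                  0, 0, (γ - 1) / 2 * u₁, 0;
                  0, 2 * (γ - 1) * φ₄ / φ₁, 0, (2 - γ) * u₁]) :
    ![φ₁, φ₂, φ₃, φ₄] ⬝ᵥ A₁.mulVec ![φ₁, φ₂, φ₃, φ₄]
        = u₁ * (α ^ 2 * φ₁ ^ 2 + (γ - 1) / 2 * (φ₂ ^ 2 + φ₃ ^ 2) + γ * φ₄ ^ 2) ∧
    ∀ Ψ : Fin 4 → ℝ, Ψ ≠ 0 →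
      0 < α ^ 2 * (Ψ 0) ^ 2 + (γ - 1) / 2 * ((Ψ 1) ^ 2 + (Ψ 2) ^ 2)
          + γ * (Ψ 3) ^ 2 := by
  constructor
  · subst hA hφ₂
    simp [dotProduct, mulVec, Fin.sum_univ_four, Matrix.vecHead, Matrix.vecTail]
    field_simp
    ring
  · intro Ψ hΨ
    have hγ' : (0:ℝ) < (γ - 1) / 2 := by linarith
    have hγ0 : (0:ℝ) < γ := by linarith
    have h0 : ∃ i, Ψ i ≠ 0 := by
      by_contra h
      push_neg at h
      exact hΨ (funext h)
    obtain ⟨i, hi⟩ := h0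
    have hsq : 0 < Ψ i ^ 2 := pow_pos (abs_pos.mpr hi) 2 |>.trans_le (by rw [sq_abs])
    have h1 : 0 ≤ α ^ 2 * Ψ 0 ^ 2 := by positivity
    have h2 : 0 ≤ (γ - 1) / 2 * (Ψ 1 ^ 2 + Ψ 2 ^ 2) := by positivity
    have h3 : 0 ≤ γ * Ψ 3 ^ 2 := by positivity
    fin_cases i
    · nlinarith [show (0:ℝ) < Ψ 0 ^ 2 from hsq]
    · nlinarith [show (0:ℝ) < Ψ 1 ^ 2 from hsq, sq_nonneg (Ψ 2)]
    · nlinarith [show (0:ℝ) < Ψ 2 ^ 2 from hsq, sq_nonneg (Ψ 1)]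
    · nlinarith [show (0:ℝ) < Ψ 3 ^ 2 from hsq]
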